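/- arXiv:1407.2224 — 4 statements merged into one kernel-verified Lean document; each statement's English description precedes it below -/
import Mathlib

section
/- The smeared Pauli observables A_k^λ(±) = (1/2)(I ± λσ_k) for k ∈ {x,z} are jointly measurable whenever λ ≤ 1/√2: the operators G(i,j) = (1/4)(I + iλσ_x + jλσ_z), i,j ∈ {±1}, are positive semidefinite, sum to the identity, and have marginals A_x^λ and A_z^λ. -/
open Matrix ComplexOrder

noncomputable def σx : Matrix (Fin 2) (Fin 2) ℂ := !![0, 1; 1, 0]
noncomputable def σz : Matrix (Fin 2) (Fin 2) ℂ := !![1, 0; 0, -1]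

/-- The smeared Pauli observable `(1/2)(I + s·l·σ)` with smearing `l` and sign `s`. -/
noncomputable def smeared (σ : Matrix (Fin 2) (Fin 2) ℂ) (l s : ℝ) :
    Matrix (Fin 2) (Fin 2) ℂ :=
  (1 / 2 : ℂ) • ((1 : Matrix (Fin 2) (Fin 2) ℂ) + ((s * l : ℝ) : ℂ) • σ)

/-- The candidate joint observable `G i j = (1/4)(I + i·l·σx + j·l·σz)`. -/
noncomputable def G (l i j : ℝ) : Matrix (Fin 2) (Fin 2) ℂ :=
  (1 / 4 : ℂ) • ((1 : Matrix (Fin 2) (Fin 2) ℂ)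
    + ((i * l : ℝ) : ℂ) • σx + ((j * l : ℝ) : ℂ) • σz)


/-!
A Hermitian `2 × 2` matrix with nonnegative diagonal and nonnegative determinant is positive
semidefinite. Each `4 • G l i j` is `I + a σx + b σz` with `(a, b) = (i l, j l)`, whose determinant
is `1 - a² - b² = 1 - 2 l²`, nonnegative exactly when `l ≤ 1 / √2`.
-/

theorem posSemidef_fin_two_of_normSq_le {p r : ℝ} {q : ℂ} (hp : 0 ≤ p) (hr : 0 ≤ r)
    (hq : Complex.normSq q ≤ p * r) :
    (!![(p : ℂ), q; star q, (r : ℂ)]).PosSemidef := by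
  rw [Matrix.posSemidef_iff_dotProduct_mulVec]
  refine ⟨?_, fun x => ?_⟩
  · ext i j
    fin_cases i <;> fin_cases j <;> simp [Matrix.conjTranspose_apply]
  rw [Complex.nonneg_iff]
  simp only [dotProduct, mulVec, Fin.sum_univ_two, Complex.normSq_apply] at hq ⊢
  simp only [Fin.isValue, Pi.star_apply, RCLike.star_def, of_apply, cons_val', cons_val_zero,
    cons_val_fin_one, cons_val_one, Complex.add_re, Complex.mul_re, Complex.conj_re,
    Complex.ofReal_re, Complex.ofReal_im, zero_mul, sub_zero, Complex.conj_im, Complex.add_im,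
    Complex.mul_im, add_zero, neg_mul, sub_neg_eq_add]
  constructor
  · rcases hp.eq_or_lt with rfl | hp
    · have hre : q.re = 0 := by nlinarith
      have him : q.im = 0 := by nlinarith
      simp only [zero_mul, hre, him, sub_self, add_zero, mul_zero, zero_add, neg_zero]
      nlinarith [mul_nonneg hr (add_nonneg (sq_nonneg (x 1).re) (sq_nonneg (x 1).im))]
    -- `p • Q(x) = |p x₀ + q x₁|² + (p r - |q|²) |x₁|²`
    · nlinarith [sq_nonneg (p * (x 0).re + q.re * (x 1).re - q.im * (x 1).im),
        sq_nonneg (p * (x 0).im + q.re * (x 1).im + q.im * (x 1).re),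
        mul_nonneg (sub_nonneg.2 hq) (add_nonneg (sq_nonneg (x 1).re) (sq_nonneg (x 1).im))]
  · ring

theorem one_add_smul_σx_add_smul_σz_posSemidef {a b : ℝ} (h : a ^ 2 + b ^ 2 ≤ 1) :
    (1 + (a : ℂ) • σx + (b : ℂ) • σz).PosSemidef := by
  have hσ : 1 + (a : ℂ) • σx + (b : ℂ) • σz
      = !![((1 + b : ℝ) : ℂ), (a : ℂ); star (a : ℂ), ((1 - b : ℝ) : ℂ)] := by
    ext i j
    fin_cases i <;> fin_cases j <;> simp [σx, σz, sub_eq_add_neg]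
  rw [hσ]
  refine posSemidef_fin_two_of_normSq_le (by nlinarith) (by nlinarith) ?_
  rw [Complex.normSq_ofReal]
  nlinarith

theorem G_posSemidef {l i j : ℝ} (h : (i * l) ^ 2 + (j * l) ^ 2 ≤ 1) : (G l i j).PosSemidef :=
  (one_add_smul_σx_add_smul_σz_posSemidef h).smul (by positivity)

theorem G_add_G_neg_right (l i : ℝ) : G l i 1 + G l i (-1) = smeared σx l i := by
  simp only [G, smeared]
  push_cast
  module

theorem G_add_G_neg_left (l j : ℝ) : G l 1 j + G l (-1) j = smeared σz l j := by
  simp only [G, smeared]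
  push_cast
  module

theorem smeared_add_smeared_neg (σ : Matrix (Fin 2) (Fin 2) ℂ) (l : ℝ) :
    smeared σ l 1 + smeared σ l (-1) = 1 := by
  simp only [smeared]
  push_cast
  module

theorem stmt_2 (l : ℝ) (hl0 : 0 ≤ l) (hl : l ≤ 1 / Real.sqrt 2) :
    (∀ i ∈ ({-1, 1} : Set ℝ), ∀ j ∈ ({-1, 1} : Set ℝ), (G l i j).PosSemidef) ∧
    G l 1 1 + G l 1 (-1) + G l (-1) 1 + G l (-1) (-1) = 1 ∧
    (∀ i ∈ ({-1, 1} : Set ℝ), G l i 1 + G l i (-1) = smeared σx l i) ∧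
    (∀ j ∈ ({-1, 1} : Set ℝ), G l 1 j + G l (-1) j = smeared σz l j) := by
  have hl2 : 2 * l ^ 2 ≤ 1 := by
    have := pow_le_pow_left₀ hl0 hl 2
    rw [div_pow, Real.sq_sqrt zero_le_two] at this
    linarith
  refine ⟨?_, ?_, fun i _ => G_add_G_neg_right l i, fun j _ => G_add_G_neg_left l j⟩
  · rintro i (rfl | rfl) j (rfl | rfl) <;> exact G_posSemidef (by nlinarith)
  · rw [add_assoc, G_add_G_neg_right, G_add_G_neg_right, smeared_add_smeared_neg]
end

section
/- If a collection of POVMs {A_k} on Alice's side is jointly measurable, then for every bipartite state ρ_AB the assemblage ρ_{x|k} = Tr_A[(A_k(x) ⊗ I) ρ_AB] admits a hidden state model: there exist positive semidefinite operators σ_λ with Tr(∑_λ σ_λ) = 1 and probabilities p(x|k,λ) with ∑_x p(x|k,λ) = 1 such that ρ_{x|k} = ∑_λ p(x|k,λ) σ_λ for all x, k. -/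
/-!
If `A_k(x) = ∑_λ D_λ(x|k) G(λ)`, then linearity of the steering map `M ↦ Tr_A[(M ⊗ I) ρ]` gives
`ρ_{x|k} = ∑_λ D_λ(x|k) σ_λ` with `σ_λ = Tr_A[(G(λ) ⊗ I) ρ]`. Each `σ_λ` is positive: writing
`G(λ) = S* S` and moving `S ⊗ I` around the partial trace over `A`, it is the partial trace of
the positive matrix `(S ⊗ I) ρ (S ⊗ I)*`. Since `∑_λ G(λ) = I`, the `σ_λ` sum to `Tr_A ρ`, of
trace one.
-/

open Matrix ComplexOrder Kronecker

variable {dA dB : ℕ}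

noncomputable def ptraceA (ρ : Matrix (Fin dA × Fin dB) (Fin dA × Fin dB) ℂ) :
    Matrix (Fin dB) (Fin dB) ℂ :=
  Matrix.of fun j j' => ∑ i : Fin dA, ρ (i, j) (i, j')

def JointlyMeasurable {n : ℕ} {K X : Type*} [Fintype X]
    (A : K → X → Matrix (Fin n) (Fin n) ℂ) : Prop :=
  ∃ (m : ℕ) (G : Fin m → Matrix (Fin n) (Fin n) ℂ) (D : Fin m → K → X → ℝ),
    (∀ lam, (G lam).PosSemidef) ∧ (∑ lam, G lam = 1) ∧
    (∀ lam k x, 0 ≤ D lam k x) ∧ (∀ lam k, ∑ x, D lam k x = 1) ∧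
    (∀ k x, A k x = ∑ lam, ((D lam k x : ℝ) : ℂ) • G lam)

def HiddenStateModel {d : ℕ} {K X : Type*} [Fintype X]
    (ρ : K → X → Matrix (Fin d) (Fin d) ℂ) : Prop :=
  ∃ (m : ℕ) (σ : Fin m → Matrix (Fin d) (Fin d) ℂ) (p : Fin m → K → X → ℝ),
    (∀ lam, (σ lam).PosSemidef) ∧ (∑ lam, (σ lam).trace = 1) ∧
    (∀ lam k x, 0 ≤ p lam k x) ∧ (∀ lam k, ∑ x, p lam k x = 1) ∧
    (∀ k x, ρ k x = ∑ lam, ((p lam k x : ℝ) : ℂ) • σ lam)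

theorem JointlyMeasurable.hiddenStateModel_map {n d : ℕ} {K X : Type*} [Fintype X]
    {A : K → X → Matrix (Fin n) (Fin n) ℂ} (hA : JointlyMeasurable A)
    (Φ : Matrix (Fin n) (Fin n) ℂ →ₗ[ℂ] Matrix (Fin d) (Fin d) ℂ)
    (hΦ : ∀ M, M.PosSemidef → (Φ M).PosSemidef) (hΦ1 : (Φ 1).trace = 1) :
    HiddenStateModel fun k x => Φ (A k x) := by
  obtain ⟨m, G, D, hG, hGsum, hD0, hD1, hAG⟩ := hA
  refine ⟨m, fun lam => Φ (G lam), D, fun lam => hΦ _ (hG lam), ?_, hD0, hD1, fun k x => ?_⟩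
  · rw [← trace_sum, ← map_sum, hGsum, hΦ1]
  · simp only [hAG, map_sum, map_smul]

theorem ptraceA_eq_sum_submatrix (ρ : Matrix (Fin dA × Fin dB) (Fin dA × Fin dB) ℂ) :
    ptraceA ρ = ∑ i, ρ.submatrix (Prod.mk i) (Prod.mk i) := by
  ext j j'
  simp [ptraceA, Matrix.sum_apply]

theorem ptraceA_posSemidef {ρ : Matrix (Fin dA × Fin dB) (Fin dA × Fin dB) ℂ}
    (hρ : ρ.PosSemidef) : (ptraceA ρ).PosSemidef := by
  rw [ptraceA_eq_sum_submatrix]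
  exact posSemidef_sum _ fun i _ => hρ.submatrix _

theorem trace_ptraceA (ρ : Matrix (Fin dA × Fin dB) (Fin dA × Fin dB) ℂ) :
    (ptraceA ρ).trace = ρ.trace := by
  simp only [ptraceA, trace, diag, of_apply, Fintype.sum_prod_type]
  exact Finset.sum_comm

theorem ptraceA_kronecker_one_mul (M : Matrix (Fin dA) (Fin dA) ℂ)
    (ρ : Matrix (Fin dA × Fin dB) (Fin dA × Fin dB) ℂ) :
    ptraceA ((M ⊗ₖ (1 : Matrix (Fin dB) (Fin dB) ℂ)) * ρ)
      = ptraceA (ρ * (M ⊗ₖ (1 : Matrix (Fin dB) (Fin dB) ℂ))) := by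
  ext j j'
  simp only [ptraceA, of_apply, mul_apply, kroneckerMap_apply, one_apply, mul_ite, mul_one,
    mul_zero, ite_mul, zero_mul, Fintype.sum_prod_type, Finset.sum_ite_eq, Finset.sum_ite_eq',
    Finset.mem_univ, ↓reduceIte]
  rw [Finset.sum_comm]
  simp only [mul_comm]

noncomputable def steeringMap (ρ : Matrix (Fin dA × Fin dB) (Fin dA × Fin dB) ℂ) :
    Matrix (Fin dA) (Fin dA) ℂ →ₗ[ℂ] Matrix (Fin dB) (Fin dB) ℂ where
  toFun M := ptraceA ((M ⊗ₖ (1 : Matrix (Fin dB) (Fin dB) ℂ)) * ρ)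
  map_add' M N := by ext; simp [ptraceA, add_kronecker, add_mul, Finset.sum_add_distrib]
  map_smul' c M := by ext; simp [ptraceA, smul_kronecker, Finset.mul_sum]

theorem steeringMap_apply (ρ : Matrix (Fin dA × Fin dB) (Fin dA × Fin dB) ℂ)
    (M : Matrix (Fin dA) (Fin dA) ℂ) :
    steeringMap ρ M = ptraceA ((M ⊗ₖ (1 : Matrix (Fin dB) (Fin dB) ℂ)) * ρ) := rfl

theorem trace_steeringMap_one (ρ : Matrix (Fin dA × Fin dB) (Fin dA × Fin dB) ℂ) :
    (steeringMap ρ 1).trace = ρ.trace := by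
  rw [steeringMap_apply, one_kronecker_one, one_mul, trace_ptraceA]

theorem steeringMap_posSemidef {ρ : Matrix (Fin dA × Fin dB) (Fin dA × Fin dB) ℂ}
    (hρ : ρ.PosSemidef) {M : Matrix (Fin dA) (Fin dA) ℂ} (hM : M.PosSemidef) :
    (steeringMap ρ M).PosSemidef := by
  open scoped MatrixOrder in
  obtain ⟨S, rfl⟩ := CStarAlgebra.nonneg_iff_eq_star_mul_self.mp hM.nonneg
  have hS : (Sᴴ * S) ⊗ₖ (1 : Matrix (Fin dB) (Fin dB) ℂ)
      = (Sᴴ ⊗ₖ (1 : Matrix (Fin dB) (Fin dB) ℂ)) * (S ⊗ₖ (1 : Matrix (Fin dB) (Fin dB) ℂ)) := by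
    rw [← mul_kronecker_mul, one_mul]
  rw [steeringMap_apply, star_eq_conjTranspose, hS, Matrix.mul_assoc, ptraceA_kronecker_one_mul]
  simpa [conjTranspose_kronecker] using
    ptraceA_posSemidef (hρ.mul_mul_conjTranspose_same (S ⊗ₖ (1 : Matrix (Fin dB) (Fin dB) ℂ)))

theorem stmt_5_general {K X : Type*} [Fintype X]
    (A : K → X → Matrix (Fin dA) (Fin dA) ℂ)
    (hJM : JointlyMeasurable A)
    (ρAB : Matrix (Fin dA × Fin dB) (Fin dA × Fin dB) ℂ)
    (hρ : ρAB.PosSemidef) (hρtr : ρAB.trace = 1) :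
    HiddenStateModel (fun k x =>
      ptraceA ((A k x ⊗ₖ (1 : Matrix (Fin dB) (Fin dB) ℂ)) * ρAB)) :=
  hJM.hiddenStateModel_map (steeringMap ρAB) (fun _ => steeringMap_posSemidef hρ)
    ((trace_steeringMap_one ρAB).trans hρtr)

theorem stmt_5 {K X : Type*} [Fintype K] [Fintype X]
    (A : K → X → Matrix (Fin dA) (Fin dA) ℂ)
    (hpos : ∀ k x, (A k x).PosSemidef) (hsum : ∀ k, ∑ x, A k x = 1)
    (hJM : JointlyMeasurable A)
    (ρAB : Matrix (Fin dA × Fin dB) (Fin dA × Fin dB) ℂ)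
    (hρ : ρAB.PosSemidef) (hρtr : ρAB.trace = 1) :
    HiddenStateModel (fun k x =>
      ptraceA ((A k x ⊗ₖ (1 : Matrix (Fin dB) (Fin dB) ℂ)) * ρAB)) :=
  stmt_5_general A hJM ρAB hρ hρtr
end

section
/- Two sharp projective measurements given by orthogonal projections P and Q (with POVMs {P, I−P} and {Q, I−Q}) are jointly measurable if and only if [P,Q] = 0. -/
/-!
If `G` jointly measures `{P, 1 - P}` and `{Q, 1 - Q}`, then `0 ≤ G₁₁ ≤ P` and `0 ≤ G₀₁ ≤ 1 - P`.
An effect below a projection is absorbed by it, so `P G₁₁ = G₁₁ = G₁₁ P` and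
`P G₀₁ = 0 = G₀₁ P`; hence `P Q = P (G₁₁ + G₀₁) = G₁₁ = Q P`. Conversely, if `P` and `Q`
commute, the products `P_i Q_j` are projections and form a joint measurement.
-/

open Matrix ComplexOrder

/-- The dichotomic sharp POVM `{P, 1 - P}` associated to a projection `P`. -/
def sharpPOVM {d : ℕ} (P : Matrix (Fin d) (Fin d) ℂ) : Bool → Matrix (Fin d) (Fin d) ℂ :=
  fun b => if b then P else 1 - P

open scoped MatrixOrder Matrix.Norms.L2Operator

namespace IsStarProjection

variable {A : Type*} [CStarAlgebra A] [PartialOrder A] [StarOrderedRing A] {p a b : A}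

theorem mul_eq_zero_of_nonneg_of_le_one_sub (hp : IsStarProjection p) (hb : 0 ≤ b)
    (hbp : b ≤ 1 - p) : b * p = 0 ∧ p * b = 0 := by
  obtain ⟨hright, hleft⟩ := hp.one_sub.mul_right_and_mul_left_of_nonneg_of_le hb hbp
  rw [mul_sub, mul_one, sub_eq_self] at hright
  rw [sub_mul, one_mul, sub_eq_self] at hleft
  exact ⟨hright, hleft⟩

theorem commute_add_of_le_of_le_one_sub (hp : IsStarProjection p) (ha : 0 ≤ a) (hap : a ≤ p)
    (hb : 0 ≤ b) (hbp : b ≤ 1 - p) : Commute p (a + b) := by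
  obtain ⟨hap_right, hap_left⟩ := hp.mul_right_and_mul_left_of_nonneg_of_le ha hap
  obtain ⟨hbp_right, hbp_left⟩ := hp.mul_eq_zero_of_nonneg_of_le_one_sub hb hbp
  change p * (a + b) = (a + b) * p
  rw [mul_add, add_mul, hap_right, hap_left, hbp_right, hbp_left]

end IsStarProjection

section SharpPOVM

variable {d : ℕ} {P Q : Matrix (Fin d) (Fin d) ℂ}

theorem isStarProjection_sharpPOVM (hP : IsStarProjection P) (b : Bool) :
    IsStarProjection (sharpPOVM P b) := by
  cases b
  · exact hP.one_sub
  · exact hP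

variable (P) in
theorem sum_sharpPOVM : ∑ b, sharpPOVM P b = 1 := by
  simp [sharpPOVM]

theorem Commute.sharpPOVM (hPQ : Commute P Q) (i j : Bool) :
    Commute (sharpPOVM P i) (sharpPOVM Q j) := by
  cases i <;> cases j <;> simp only [_root_.sharpPOVM, Bool.false_eq_true, if_true, if_false]
  · exact (Commute.one_left _).sub_left ((Commute.one_right P).sub_right hPQ)
  · exact (Commute.one_left Q).sub_left hPQ
  · exact (Commute.one_right P).sub_right hPQ
  · exact hPQ

end SharpPOVM

theorem stmt_16 {d : ℕ} (P Q : Matrix (Fin d) (Fin d) ℂ)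
    (hP : P * P = P) (hPherm : P.IsHermitian)
    (hQ : Q * Q = Q) (hQherm : Q.IsHermitian) :
    (∃ G : Bool → Bool → Matrix (Fin d) (Fin d) ℂ,
        (∀ i j, (G i j).PosSemidef) ∧
        (∑ i : Bool, ∑ j : Bool, G i j = 1) ∧
        (∀ i, ∑ j : Bool, G i j = sharpPOVM P i) ∧
        (∀ j, ∑ i : Bool, G i j = sharpPOVM Q j)) ↔
      Commute P Q := by
  have hPproj : IsStarProjection P := ⟨hP, hPherm⟩
  have hQproj : IsStarProjection Q := ⟨hQ, hQherm⟩
  constructor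
  · rintro ⟨G, hG, -, hGP, hGQ⟩
    have hP₁ : G true true + G true false = P := by
      simpa [Fintype.sum_bool, sharpPOVM] using hGP true
    have hP₀ : G false true + G false false = 1 - P := by
      simpa [Fintype.sum_bool, sharpPOVM] using hGP false
    have hQ₁ : G true true + G false true = Q := by
      simpa [Fintype.sum_bool, sharpPOVM] using hGQ true
    rw [← hQ₁]
    exact hPproj.commute_add_of_le_of_le_one_sub (hG _ _).nonneg
      (hP₁ ▸ le_add_of_nonneg_right (hG _ _).nonneg) (hG _ _).nonneg
      (hP₀ ▸ le_add_of_nonneg_right (hG _ _).nonneg)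
  · intro hPQ
    refine ⟨fun i j => sharpPOVM P i * sharpPOVM Q j, fun i j => ?_, ?_, fun i => ?_, fun j => ?_⟩
    · exact ((isStarProjection_sharpPOVM hPproj i).mul (isStarProjection_sharpPOVM hQproj j)
        (hPQ.sharpPOVM i j)).nonneg.posSemidef
    · rw [← Finset.sum_mul_sum, sum_sharpPOVM, sum_sharpPOVM, one_mul]
    · rw [← Finset.mul_sum, sum_sharpPOVM, mul_one]
    · rw [← Finset.sum_mul, sum_sharpPOVM, one_mul]
end

section
/- Steering is preserved under invertible SLOCC on the characterized side: if the assemblage ρ_{x|k} admits no hidden state model, and K is an invertible operator on Bob's space, then the transformed assemblage K ρ_{x|k} K† / Tr[∑_x K ρ_{x|1} K†] also admits no hidden state model. -/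
/-!
Conjugating back by `K⁻¹` turns a hidden state model `(p, σ)` of the rescaled assemblage
`c⁻¹ • K ρ Kᴴ` (with `c` its normalising trace) into the decomposition
`ρ k x = ∑ λ, p(x|k,λ) • c • K⁻¹ σ_λ K⁻¹ᴴ`. These states are positive semidefinite because `c`,
the trace of a positive semidefinite matrix, is nonnegative; and they are automatically
normalised, since summing any such decomposition over `x` shows that the states add up to
`∑ x, ρ k₀ x`, which has unit trace.
-/

open Matrix ComplexOrder

lemma sum_sum_ofReal_smul_eq_sum {ι X M : Type*} [Fintype ι] [Fintype X] [AddCommMonoid M]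
    [Module ℂ M] (p : ι → X → ℝ) (hp : ∀ i, ∑ x, p i x = 1) (τ : ι → M) :
    ∑ x, ∑ i, ((p i x : ℝ) : ℂ) • τ i = ∑ i, τ i := by
  rw [Finset.sum_comm]
  simp_rw [← Finset.sum_smul, ← Complex.ofReal_sum, hp, Complex.ofReal_one, one_smul]

section HiddenStateModel

variable {d : ℕ} {K X : Type*} [Fintype X] {ρ : K → X → Matrix (Fin d) (Fin d) ℂ}

lemma hiddenStateModel_of_decomposition {m : ℕ} (τ : Fin m → Matrix (Fin d) (Fin d) ℂ)
    (p : Fin m → K → X → ℝ) (hτ : ∀ i, (τ i).PosSemidef) (hp₀ : ∀ i k x, 0 ≤ p i k x)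
    (hp₁ : ∀ i k, ∑ x, p i k x = 1) (hρ : ∀ k x, ρ k x = ∑ i, ((p i k x : ℝ) : ℂ) • τ i)
    (k₀ : K) (htr : (∑ x, ρ k₀ x).trace = 1) : HiddenStateModel ρ := by
  refine ⟨m, τ, p, hτ, ?_, hp₀, hp₁, hρ⟩
  rw [← trace_sum, ← htr, ← sum_sum_ofReal_smul_eq_sum (fun i => p i k₀) (fun i => hp₁ i k₀) τ]
  simp_rw [hρ]

lemma HiddenStateModel.trace_sum_eq_one (h : HiddenStateModel ρ) (k : K) :
    (∑ x, ρ k x).trace = 1 := by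
  obtain ⟨m, σ, p, -, hσ, -, hp₁, hρ⟩ := h
  simp_rw [hρ, sum_sum_ofReal_smul_eq_sum (fun i => p i k) (fun i => hp₁ i k) σ, trace_sum, hσ]

lemma HiddenStateModel.smul_conj (h : HiddenStateModel ρ) (L : Matrix (Fin d) (Fin d) ℂ)
    {c : ℂ} (hc : 0 ≤ c) (k₀ : K) (htr : (∑ x, c • (L * ρ k₀ x * Lᴴ)).trace = 1) :
    HiddenStateModel (fun k x => c • (L * ρ k x * Lᴴ)) := by
  obtain ⟨m, σ, p, hσ, -, hp₀, hp₁, hρ⟩ := h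
  refine hiddenStateModel_of_decomposition (fun i => c • (L * σ i * Lᴴ)) p
    (fun i => ((hσ i).mul_mul_conjTranspose_same L).smul hc) hp₀ hp₁ (fun k x => ?_) k₀ htr
  simp_rw [hρ, Finset.mul_sum, Finset.sum_mul, Finset.smul_sum, mul_smul_comm, smul_mul_assoc,
    smul_comm c]

end HiddenStateModel

theorem stmt_17_general {d : ℕ} {K X : Type*} [Fintype X]
    (ρ : K → X → Matrix (Fin d) (Fin d) ℂ)
    (hpos : ∀ k x, (ρ k x).PosSemidef)
    (k₀ : K) (htr : (∑ x, ρ k₀ x).trace = 1)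
    (hsteer : ¬ HiddenStateModel ρ)
    (Kmat : Matrix (Fin d) (Fin d) ℂ) (hK : IsUnit Kmat) :
    ¬ HiddenStateModel (fun k x =>
      ((∑ y, Kmat * ρ k₀ y * Kmatᴴ).trace)⁻¹ • (Kmat * ρ k x * Kmatᴴ)) := by
  set c := (∑ y, Kmat * ρ k₀ y * Kmatᴴ).trace
  intro h
  -- for `c = 0` the junk value `c⁻¹ = 0` makes the rescaled assemblage vanish
  have hc₀ : c ≠ 0 := by
    intro hc
    simpa [hc] using h.trace_sum_eq_one k₀
  have hc : 0 ≤ c :=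
    (posSemidef_sum _ fun y _ => (hpos k₀ y).mul_mul_conjTranspose_same Kmat).trace_nonneg
  have hdet : IsUnit Kmat.det := (isUnit_iff_isUnit_det Kmat).mp hK
  have hρ : ∀ k x, ρ k x = c • (Kmat⁻¹ * (c⁻¹ • (Kmat * ρ k x * Kmatᴴ)) * Kmat⁻¹ᴴ) := by
    intro k x
    rw [mul_smul_comm, smul_mul_assoc, smul_smul, mul_inv_cancel₀ hc₀, one_smul,
      Matrix.mul_assoc, Matrix.mul_assoc, ← conjTranspose_mul, nonsing_inv_mul _ hdet,
      conjTranspose_one, Matrix.mul_one, ← Matrix.mul_assoc, nonsing_inv_mul _ hdet,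
      Matrix.one_mul]
  have htr' : (∑ x, c • (Kmat⁻¹ * (c⁻¹ • (Kmat * ρ k₀ x * Kmatᴴ)) * Kmat⁻¹ᴴ)).trace = 1 := by
    simp_rw [← hρ, htr]
  exact hsteer (funext₂ hρ ▸ h.smul_conj _ hc k₀ htr')

theorem stmt_17 {d : ℕ} {K X : Type*} [Fintype X]
    (ρ : K → X → Matrix (Fin d) (Fin d) ℂ)
    (hpos : ∀ k x, (ρ k x).PosSemidef)
    (hnosig : ∀ k k', ∑ x, ρ k x = ∑ x, ρ k' x)
    (k₀ : K) (htr : (∑ x, ρ k₀ x).trace = 1)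
    (hsteer : ¬ HiddenStateModel ρ)
    (Kmat : Matrix (Fin d) (Fin d) ℂ) (hK : IsUnit Kmat) :
    ¬ HiddenStateModel (fun k x =>
      ((∑ y, Kmat * ρ k₀ y * Kmatᴴ).trace)⁻¹ • (Kmat * ρ k x * Kmatᴴ)) :=
  stmt_17_general ρ hpos k₀ htr hsteer Kmat hK
end
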